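/- Assume conditions B1–B5 hold for every trial, i.e., for every s ∈ {1,…,m}: (B1) for every ω with S ω = s and every a ∈ {z, z'}, Z ω = a implies Ypo a ω = Y ω; (B2) for every a ∈ {z, z'} and every x with μ(X = x, S = s) > 0, E[Ypo a | X = x, S = s, Z = a] = E[Ypo a | X = x, S = s]; (B3) for every a ∈ {z, z'} and every x with μ(X = x, S = s) > 0, μ(Z = a, X = x, S = s) > 0; (B4) for every x with μ(X = x, S = 0) > 0, E[Ypo z − Ypo z' | X = x, S = 0] = E[Ypo z − Ypo z' | X = x, S = s]; (B5) for every x with μ(X = x, S = 0) > 0, μ(X = x, S = s) > 0. Then the following observed-data implication holds: for every x with μ(X = x, S = 0) > 0 and all s, s' ∈ {1,…,m}, E[Y | X = x, S = s, Z = z] − E[Y | X = x, S = s, Z = z'] = E[Y | X = x, S = s', Z = z] − E[Y | X = x, S = s', Z = z']. -/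
import Mathlib


open MeasureTheory ProbabilityTheory

/-- Conditional expectation `E[W | A] := ∫ W dμ(·|A)` where `μ(·|A) := μ(· ∩ A)/μ(A)`. -/
noncomputable def condMean {Ω : Type*} [MeasurableSpace Ω] (μ : Measure Ω)
    (A : Set Ω) (W : Ω → ℝ) : ℝ :=
  ∫ ω, W ω ∂(μ[|A])

/-- Conditional probability `Pr[B | A] := μ(B ∩ A)/μ(A)`. -/
noncomputable def condPr {Ω : Type*} [MeasurableSpace Ω] (μ : Measure Ω)
    (A B : Set Ω) : ℝ :=
  (μ (B ∩ A) / μ A).toReal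

lemma condMean_congr_on {Ω : Type*} [MeasurableSpace Ω] (μ : Measure Ω)
    (A : Set Ω) {f g : Ω → ℝ}
    (hf : AEStronglyMeasurable f μ) (hg : AEStronglyMeasurable g μ)
    (h : ∀ ω ∈ A, f ω = g ω) :
    condMean μ A f = condMean μ A g := by
  have hac : μ[|A] ≪ μ := cond_absolutelyContinuous
  obtain ⟨f', hf'm, hff'⟩ := hf
  obtain ⟨g', hg'm, hgg'⟩ := hg
  have hD : MeasurableSet {ω | f' ω ≠ g' ω} :=
    (measurableSet_eq_fun hf'm.measurable hg'm.measurable).compl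
  have hnull : μ ({ω | f ω ≠ f' ω} ∪ {ω | g ω ≠ g' ω}) = 0 := by
    refine measure_union_null ?_ ?_
    · exact ae_iff.1 hff'
    · exact ae_iff.1 hgg'
  have hsub : {ω | f' ω ≠ g' ω} ∩ A ⊆ {ω | f ω ≠ f' ω} ∪ {ω | g ω ≠ g' ω} := by
    rintro ω ⟨hne, hωA⟩
    by_contra hcon
    simp only [Set.mem_setOf_eq, not_not, Set.mem_union] at hcon hne
    rcases not_or.1 hcon with ⟨h1, h2⟩
    simp only [Set.mem_setOf_eq, not_not] at h1 h2
    exact hne (h1 ▸ h2 ▸ h ω hωA)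
  have hνD : (μ[|A]) {ω | f' ω ≠ g' ω} = 0 := by
    unfold ProbabilityTheory.cond
    rw [Measure.smul_apply, Measure.restrict_apply hD]
    rw [measure_mono_null hsub hnull]
    simp
  have h1 : f =ᵐ[μ[|A]] f' := hac.ae_eq hff'
  have h2 : f' =ᵐ[μ[|A]] g' := ae_iff.2 hνD
  have h3 : g' =ᵐ[μ[|A]] g := (hac.ae_eq hgg').symm
  exact integral_congr_ae ((h1.trans h2).trans h3)

lemma integrable_cond' {Ω : Type*} [MeasurableSpace Ω] (μ : Measure Ω)
    [IsFiniteMeasure μ] (A : Set Ω) {f : Ω → ℝ} (hf : Integrable f μ) :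
    Integrable f (μ[|A]) := by
  unfold ProbabilityTheory.cond
  rcases eq_or_ne (μ A) 0 with h0 | h0
  · rw [Measure.restrict_eq_zero.2 h0]
    simp [integrable_zero_measure]
  · exact (hf.restrict).smul_measure (by simp [h0])

lemma condMean_sub' {Ω : Type*} [MeasurableSpace Ω] (μ : Measure Ω)
    [IsFiniteMeasure μ] (A : Set Ω) {f g : Ω → ℝ}
    (hf : Integrable f μ) (hg : Integrable g μ) :
    condMean μ A (fun ω => f ω - g ω) = condMean μ A f - condMean μ A g := by
  unfold condMean
  exact integral_sub (integrable_cond' μ A hf) (integrable_cond' μ A hg)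

theorem stmt_2
    {Ω 𝒳 𝒵 : Type*} [MeasurableSpace Ω]
    [Fintype 𝒳] [Nonempty 𝒳] [MeasurableSpace 𝒳]
    [Fintype 𝒵] [Nonempty 𝒵] [MeasurableSpace 𝒵] [DecidableEq 𝒵]
    (μ : Measure Ω) [IsProbabilityMeasure μ]
    (m : ℕ) (hm : 1 ≤ m)
    (X : Ω → 𝒳) (S : Ω → Fin (m + 1)) (Z : Ω → 𝒵) (Y : Ω → ℝ) (Ypo : 𝒵 → Ω → ℝ)
    (hX : Measurable X) (hS : Measurable S) (hZ : Measurable Z)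
    (hY : Integrable Y μ) (hYpo : ∀ a, Integrable (Ypo a) μ)
    (z z' : 𝒵) (hzz' : z ≠ z')
    (hS0 : 0 < μ {ω | S ω = 0})
    (B1 : ∀ s : Fin (m + 1), s ≠ 0 → ∀ ω, S ω = s →
      ∀ a ∈ ({z, z'} : Set 𝒵), Z ω = a → Ypo a ω = Y ω)
    (B2 : ∀ s : Fin (m + 1), s ≠ 0 → ∀ a ∈ ({z, z'} : Set 𝒵), ∀ x : 𝒳,
      0 < μ {ω | X ω = x ∧ S ω = s} →
      condMean μ {ω | X ω = x ∧ S ω = s ∧ Z ω = a} (Ypo a)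
        = condMean μ {ω | X ω = x ∧ S ω = s} (Ypo a))
    (B3 : ∀ s : Fin (m + 1), s ≠ 0 → ∀ a ∈ ({z, z'} : Set 𝒵), ∀ x : 𝒳,
      0 < μ {ω | X ω = x ∧ S ω = s} → 0 < μ {ω | Z ω = a ∧ X ω = x ∧ S ω = s})
    (B4 : ∀ s : Fin (m + 1), s ≠ 0 → ∀ x : 𝒳, 0 < μ {ω | X ω = x ∧ S ω = 0} →
      condMean μ {ω | X ω = x ∧ S ω = 0} (fun ω => Ypo z ω - Ypo z' ω)
        = condMean μ {ω | X ω = x ∧ S ω = s} (fun ω => Ypo z ω - Ypo z' ω))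
    (B5 : ∀ s : Fin (m + 1), s ≠ 0 → ∀ x : 𝒳, 0 < μ {ω | X ω = x ∧ S ω = 0} →
      0 < μ {ω | X ω = x ∧ S ω = s}) :
    ∀ x : 𝒳, 0 < μ {ω | X ω = x ∧ S ω = 0} →
      ∀ s s' : Fin (m + 1), s ≠ 0 → s' ≠ 0 →
        condMean μ {ω | X ω = x ∧ S ω = s ∧ Z ω = z} Y
          - condMean μ {ω | X ω = x ∧ S ω = s ∧ Z ω = z'} Y
        = condMean μ {ω | X ω = x ∧ S ω = s' ∧ Z ω = z} Y
          - condMean μ {ω | X ω = x ∧ S ω = s' ∧ Z ω = z'} Y := by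
  intro x h0 s s' hs hs'
  have key : ∀ t : Fin (m + 1), t ≠ 0 →
      condMean μ {ω | X ω = x ∧ S ω = t ∧ Z ω = z} Y
        - condMean μ {ω | X ω = x ∧ S ω = t ∧ Z ω = z'} Y
      = condMean μ {ω | X ω = x ∧ S ω = 0} (fun ω => Ypo z ω - Ypo z' ω) := by
    intro t ht
    have ht5 := B5 t ht x h0
    have e : ∀ a ∈ ({z, z'} : Set 𝒵),
        condMean μ {ω | X ω = x ∧ S ω = t ∧ Z ω = a} Y
          = condMean μ {ω | X ω = x ∧ S ω = t} (Ypo a) := by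
      intro a ha
      rw [← B2 t ht a ha x ht5]
      exact (condMean_congr_on μ _ (hYpo a).1 hY.1
        (fun ω hω => B1 t ht ω hω.2.1 a ha hω.2.2)).symm
    rw [e z (by simp), e z' (by simp [Set.mem_insert_iff]),
      ← condMean_sub' μ _ (hYpo z) (hYpo z'), ← B4 t ht x h0]
  rw [key s hs, key s' hs']
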